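/- arXiv:1303.5527 — 2 statements merged into one kernel-verified Lean document; each statement's English description precedes it below -/
import Mathlib

section
/- Let G be an r-regular simple graph with n vertices and m ≥ 1 edges, and let q_1 ≤ q_2 ≤ … ≤ q_n = 2r be the eigenvalues of Q(G) listed with multiplicity. Then f(λ, G^{-01}) = [(λ-n)(λ-2n-m+2r+2) - mn]·(λ-n)^{m-1}·∏_{i=1}^{n-1}(λ - n - m + 2 + q_i). -/
open Classical

/-- The four symbols `0, 1, +, -` used in `xyz`-transformations. -/
inductive XYZ : Type
  | zero | one | plus | minus

namespace XYZ

/-- The relation on the vertices of a graph `H` given by a symbol: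
`0` gives the empty graph, `1` the complete graph, `+` the graph itself,
`-` its complement. -/
def rel {W : Type*} (H : SimpleGraph W) : XYZ → W → W → Prop
  | .zero => fun _ _ => False
  | .one  => fun u v => u ≠ v
  | .plus => fun u v => H.Adj u v
  | .minus => fun u v => u ≠ v ∧ ¬ H.Adj u v

/-- The incidence relation between a vertex and an edge given by a symbol `z`:
`+` means incident, `-` means non-incident, `0` never, `1` always. -/
def inc {W : Type*} (G : SimpleGraph W) : XYZ → W → G.edgeSet → Prop
  | .zero => fun _ _ => False
  | .one  => fun _ _ => True
  | .plus => fun v e => v ∈ (e : Sym2 W)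
  | .minus => fun v e => v ∉ (e : Sym2 W)

theorem rel_symm {W : Type*} (H : SimpleGraph W) (x : XYZ) {u v : W}
    (h : rel H x u v) : rel H x v u := by
  cases x with
  | zero => exact h.elim
  | one => exact (h : u ≠ v).symm
  | plus => exact H.adj_symm h
  | minus => exact ⟨(h.1).symm, fun h' => h.2 (H.adj_symm h')⟩

theorem rel_irrefl {W : Type*} (H : SimpleGraph W) (x : XYZ) {u : W}
    (h : rel H x u u) : False := by
  cases x with
  | zero => exact h
  | one => exact h rfl
  | plus => exact H.irrefl h
  | minus => exact h.1 rfl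

end XYZ

/-- The `xyz`-transformation `G^{xyz}` of a graph `G`: its vertex set is
`V(G) ⊕ E(G)`; two vertices of `G` are adjacent according to the symbol `x`
(applied to `G`), two edges according to the symbol `y` (applied to the line
graph of `G`), and a vertex and an edge according to the symbol `z`
(`+` = incidence graph `B(G)`, `-` = non-incidence graph `B^c(G)`,
`0` = no vertex-edge edges, `1` = all vertex-edge edges). -/
def xyzTransform {V : Type*} (G : SimpleGraph V) (x y z : XYZ) :
    SimpleGraph (V ⊕ G.edgeSet) where
  Adj a b :=
    match a, b with
    | Sum.inl u, Sum.inl v => XYZ.rel G x u v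
    | Sum.inr e, Sum.inr f => XYZ.rel G.lineGraph y e f
    | Sum.inl v, Sum.inr e => XYZ.inc G z v e
    | Sum.inr e, Sum.inl v => XYZ.inc G z v e
  symm := ⟨by
    rintro (u | e) (v | f) h
    · exact XYZ.rel_symm G x h
    · exact h
    · exact h
    · exact XYZ.rel_symm G.lineGraph y h⟩
  loopless := ⟨by
    rintro (u | e) h
    · exact XYZ.rel_irrefl G x h
    · exact XYZ.rel_irrefl G.lineGraph y h⟩

/-- The signless Laplacian matrix `Q(G) = D(G) + A(G)` of a graph. -/
noncomputable def signlessLaplacian {V : Type*} [Fintype V] (G : SimpleGraph V) :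
    Matrix V V ℝ :=
  Matrix.of fun u v =>
    (if u = v then (G.degree u : ℝ) else 0) + (if G.Adj u v then 1 else 0)

/-- The signless Laplacian characteristic polynomial
`f(λ, G) = det (λ I - Q(G))`, evaluated at a real number `λ`. -/
noncomputable def fQ {V : Type*} [Fintype V] (G : SimpleGraph V) (lam : ℝ) : ℝ :=
  Matrix.det (lam • (1 : Matrix V V ℝ) - signlessLaplacian G)


/-! With rows and columns indexed by `V(G) ⊕ E(G)`, `λI - Q(G^{-01})` is the block matrix
`[[M - J, -J], [-J, (λ - n) I]]`, where `M = (λ - n - m + r + 2) I + A(G)`: the vertex degree in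
`G^{-01}` is `n - 1 - r + m` and `A(Gᶜ) = J - I - A(G)`. For `λ ≠ n` the Schur complement of the
lower right block is `M - (1 + m / (λ - n)) J`, a rank-one perturbation of `M`. Regularity makes
`M` a shift of `Q(G)`, so `det M = ∏ (λ - n - m + 2 + q_i)`, and gives `M` the constant row sum
`λ - n - m + 2 + 2r`, so the matrix determinant lemma evaluates the complement. This proves the
formula away from the finitely many `λ` where `λ = n` or `M` is singular, and both sides are
continuous in `λ`. -/

open Matrix

theorem Fin.prod_univ_eq_prod_castLE_mul_last {M : Type*} [CommMonoid M] {n : ℕ} (hn : 0 < n)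
    (f : Fin n → M) :
    ∏ i, f i = (∏ i : Fin (n - 1), f (Fin.castLE (Nat.sub_le n 1) i)) * f ⟨n - 1, by omega⟩ := by
  obtain ⟨k, rfl⟩ : ∃ k, n = k + 1 := ⟨n - 1, by omega⟩
  exact Fin.prod_univ_castSucc f

namespace Matrix

variable {K ι κ : Type*} [Field K] [Fintype ι] [Fintype κ] [DecidableEq ι] [DecidableEq κ]

theorem det_fromBlocks_const_const_smul_one (A : Matrix ι ι K) (b : K) {d : K} (hd : d ≠ 0) :
    (fromBlocks A (of fun _ _ => b) (of fun _ _ => b) (d • 1 : Matrix κ κ K)).det =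
      d ^ Fintype.card κ * (A - (b ^ 2 * Fintype.card κ / d) • of fun _ _ => (1 : K)).det := by
  have hdet : (d • 1 : Matrix κ κ K).det = d ^ Fintype.card κ := by
    rw [det_smul, det_one, mul_one]
  have : Invertible (d • 1 : Matrix κ κ K) :=
    invertibleOfIsUnitDet _ (by rw [hdet]; exact (pow_ne_zero _ hd).isUnit)
  have hinv : ⅟(d • 1 : Matrix κ κ K) = d⁻¹ • 1 := invOf_eq_right_inv (by
    rw [smul_mul_smul_comm, Matrix.one_mul, mul_inv_cancel₀ hd, one_smul])
  rw [det_fromBlocks₂₂, hdet, hinv]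
  congr 2
  ext i j
  simp [Matrix.mul_apply]
  ring

theorem det_sub_smul_const_of_mulVec_const {A : Matrix ι ι K} (hA : IsUnit A.det) {c : K}
    (hrow : A *ᵥ (fun _ => 1) = fun _ => c) (s : K) :
    (A - s • of fun _ _ => (1 : K)).det = (1 - s * Fintype.card ι / c) * A.det := by
  have hinv : A⁻¹ *ᵥ (fun _ => 1) = fun _ => c⁻¹ := by
    have := congrArg (A⁻¹ *ᵥ ·) hrow
    rw [show (fun _ => c) = c • fun (_ : ι) => (1 : K) by ext; simp, mulVec_smul, mulVec_mulVec,
      nonsing_inv_mul _ hA, one_mulVec] at this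
    exact funext fun i => eq_inv_of_mul_eq_one_right (congrFun this i).symm
  have hrank1 : A - s • of (fun _ _ => (1 : K)) =
      A + replicateCol Unit (-s • fun _ : ι => (1 : K)) *
        replicateRow Unit (fun _ : ι => (1 : K)) := by
    ext i j
    simp [sub_eq_add_neg, Matrix.mul_apply]
  rw [hrank1, det_add_replicateCol_mul_replicateRow hA, mul_comm, det_unique, Matrix.mul_assoc,
    ← replicateCol_mulVec, mulVec_smul, hinv]
  congr 1
  simp [replicateRow_mul_replicateCol_apply, dotProduct]
  ring

end Matrix

section RegularGraph

variable {V : Type*} [Fintype V] (G : SimpleGraph V)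

theorem signlessLaplacian_eq_of_isRegularOfDegree {r : ℕ} (hreg : G.IsRegularOfDegree r) :
    signlessLaplacian G = (r : ℝ) • 1 + G.adjMatrix ℝ := by
  ext u v
  rcases eq_or_ne u v with rfl | h
  · simp [signlessLaplacian, hreg u]
  · simp [signlessLaplacian, h]

theorem det_smul_one_add_adjMatrix_eq_prod {r n : ℕ} (hreg : G.IsRegularOfDegree r)
    (hn : Fintype.card V = n) (q : Fin n → ℝ) (hq : ∀ x : ℝ, fQ G x = ∏ i : Fin n, (x - q i))
    (a : ℝ) : (a • 1 + G.adjMatrix ℝ).det = ∏ i : Fin n, (a - r + q i) := by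
  have hneg : a • 1 + G.adjMatrix ℝ = -((r - a) • 1 - signlessLaplacian G) := by
    rw [signlessLaplacian_eq_of_isRegularOfDegree G hreg, sub_smul]
    abel
  calc (a • 1 + G.adjMatrix ℝ).det
      = (-1) ^ n * ∏ i : Fin n, (r - a - q i) := by rw [hneg, det_neg, ← fQ, hq, hn]
    _ = ∏ i : Fin n, -(r - a - q i) := by
      rw [Finset.prod_neg, Finset.card_univ, Fintype.card_fin]
    _ = ∏ i : Fin n, (a - r + q i) := Finset.prod_congr rfl fun i _ => by ring

theorem smul_one_add_adjMatrix_mulVec_one {r : ℕ} (hreg : G.IsRegularOfDegree r) (a : ℝ) :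
    (a • 1 + G.adjMatrix ℝ) *ᵥ (fun _ => 1) = fun _ => a + r := by
  ext v
  simp [add_mulVec, smul_mulVec, hreg v]

theorem degree_xyzTransform_minus_zero_one_inl (v : V) :
    ((xyzTransform G .minus .zero .one).degree (Sum.inl v) : ℝ) =
      Fintype.card V - 1 - G.degree v + Fintype.card G.edgeSet := by
  have hcompl : Gᶜ.degree v + G.degree v + 1 = Fintype.card V := by
    have := G.degree_lt_card_verts v
    rw [SimpleGraph.degree_compl]
    omega
  have hnbr : (xyzTransform G .minus .zero .one).neighborFinset (Sum.inl v) =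
      (Gᶜ.neighborFinset v).disjSum Finset.univ := by
    ext (u | e)
      <;> simp only [SimpleGraph.mem_neighborFinset] <;> simp [xyzTransform, XYZ.rel, XYZ.inc]
  rw [← SimpleGraph.card_neighborFinset_eq_degree, hnbr, Finset.card_disjSum,
    SimpleGraph.card_neighborFinset_eq_degree, Finset.card_univ, ← hcompl]
  push_cast
  ring

theorem degree_xyzTransform_minus_zero_one_inr (e : G.edgeSet) :
    (xyzTransform G .minus .zero .one).degree (Sum.inr e) = Fintype.card V := by
  have hnbr : (xyzTransform G .minus .zero .one).neighborFinset (Sum.inr e) =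
      Finset.univ.disjSum ∅ := by
    ext (u | f)
      <;> simp only [SimpleGraph.mem_neighborFinset] <;> simp [xyzTransform, XYZ.rel, XYZ.inc]
  rw [← SimpleGraph.card_neighborFinset_eq_degree, hnbr, Finset.card_disjSum, Finset.card_univ,
    Finset.card_empty, add_zero]

theorem fQ_xyzTransform_minus_zero_one_eq_det_fromBlocks {r : ℕ}
    (hreg : G.IsRegularOfDegree r) (lam : ℝ) :
    fQ (xyzTransform G .minus .zero .one) lam = det (fromBlocks
      ((lam - Fintype.card V - Fintype.card G.edgeSet + r + 2) • 1 + G.adjMatrix ℝ -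
        of fun _ _ => 1)
      (of fun _ _ => -1) (of fun _ _ => -1)
      ((lam - Fintype.card V) • (1 : Matrix G.edgeSet G.edgeSet ℝ))) := by
  rw [fQ]
  congr 1
  ext (u | e) (v | f)
  · rcases eq_or_ne u v with rfl | h
    · simp [signlessLaplacian, degree_xyzTransform_minus_zero_one_inl, hreg u]
      ring
    · simp [signlessLaplacian, h, xyzTransform, XYZ.rel]
      split_ifs <;> norm_num
  · simp [signlessLaplacian, xyzTransform, XYZ.inc]
  · simp [signlessLaplacian, xyzTransform, XYZ.inc]
  · rcases eq_or_ne e f with rfl | h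
    · simp [signlessLaplacian, degree_xyzTransform_minus_zero_one_inr]
    · simp [signlessLaplacian, h, xyzTransform, XYZ.rel]

theorem fQ_xyzTransform_minus_zero_one_eq_of_ne {r n m : ℕ} (hn : Fintype.card V = n)
    (hm : Fintype.card G.edgeSet = m) (hreg : G.IsRegularOfDegree r) (q : Fin n → ℝ)
    (hq : ∀ x : ℝ, fQ G x = ∏ i : Fin n, (x - q i)) {lam : ℝ} (hlam : lam ≠ n)
    (hroot : ∀ i, lam - n - m + 2 + q i ≠ 0) :
    fQ (xyzTransform G .minus .zero .one) lam =
      (lam - n) ^ m * (1 - (1 + m / (lam - n)) * n / (lam - n - m + 2 + 2 * r)) *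
        ∏ i, (lam - n - m + 2 + q i) := by
  set M : Matrix V V ℝ := (lam - n - m + r + 2) • 1 + G.adjMatrix ℝ
  have hdetM : M.det = ∏ i, (lam - n - m + 2 + q i) := by
    rw [det_smul_one_add_adjMatrix_eq_prod G hreg hn q hq]
    exact Finset.prod_congr rfl fun i _ => by ring
  have hunit : IsUnit M.det := by
    rw [hdetM]
    exact (Finset.prod_ne_zero_iff.mpr fun i _ => hroot i).isUnit
  have hrow : M *ᵥ (fun _ => 1) = fun _ => lam - n - m + 2 + 2 * r := by
    rw [smul_one_add_adjMatrix_mulVec_one G hreg]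
    ext
    ring
  have hschur : M - (of fun _ _ => 1) - ((-1) ^ 2 * m / (lam - n)) • (of fun _ _ => 1) =
      M - (1 + m / (lam - n)) • of fun _ _ => (1 : ℝ) := by
    rw [add_smul, one_smul, sub_sub]
    norm_num
  rw [fQ_xyzTransform_minus_zero_one_eq_det_fromBlocks G hreg, hn, hm,
    det_fromBlocks_const_const_smul_one _ _ (sub_ne_zero.mpr hlam), hm, hschur,
    det_sub_smul_const_of_mulVec_const hunit hrow, hdetM, hn, mul_assoc]

end RegularGraph

theorem signless_charpoly_xyz_m01 {V : Type*} [Fintype V] (G : SimpleGraph V) (r n m : ℕ)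
    (hn : Fintype.card V = n) (hm : Fintype.card G.edgeSet = m)
    (hreg : G.IsRegularOfDegree r) (hm1 : 1 ≤ m) (hn0 : 0 < n)
    (q : Fin n → ℝ)
    (hlast : q ⟨n - 1, by omega⟩ = 2 * r)
    (hq : ∀ x : ℝ, fQ G x = ∏ i : Fin n, (x - q i)) :
    ∀ lam : ℝ,
      fQ (xyzTransform G XYZ.minus XYZ.zero XYZ.one) lam =
        ((lam - n) * (lam - 2 * n - m + 2 * r + 2) - m * n) * (lam - n) ^ (m - 1) *
          ∏ i : Fin (n - 1), (lam - n - m + 2 + q (Fin.castLE (Nat.sub_le n 1) i)) := by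
  have hdense : Dense (insert (n : ℝ) (Set.range fun i => n + m - 2 - q i))ᶜ :=
    ((Set.finite_range _).insert _).countable.dense_compl ℝ
  refine congrFun (Continuous.ext_on hdense (by unfold fQ; fun_prop) (by fun_prop) ?_)
  rintro lam hlam
  simp only [Set.mem_compl_iff, Set.mem_insert_iff, Set.mem_range, not_or, not_exists] at hlam
  have hroot : ∀ i, lam - n - m + 2 + q i ≠ 0 := fun i h => hlam.2 i (by linarith)
  have hd : lam - n ≠ 0 := sub_ne_zero.mpr hlam.1
  have hc : lam - n - m + 2 + 2 * r ≠ 0 := hlast ▸ hroot ⟨n - 1, by omega⟩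
  rw [fQ_xyzTransform_minus_zero_one_eq_of_ne G hn hm hreg q hq hlam.1 hroot,
    Fin.prod_univ_eq_prod_castLE_mul_last hn0, hlast, ← pow_sub_one_mul (by omega : m ≠ 0)]
  field_simp
  ring
end

section
/- Let G be an r-regular simple graph with n vertices and m edges, where r ≥ 2 (so that m ≥ n), and let q_1 ≤ q_2 ≤ … ≤ q_n = 2r be the eigenvalues of Q(G) listed with multiplicity. Then f(λ, G^{1+1}) = [(λ-2n-m+2)(λ-n-4r+4) - mn]·(λ-n-2r+4)^{m-n}·(λ-n-m+2)^{n-1}·∏_{i=1}^{n-1}(λ - n - 2r + 4 - q_i). -/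
open Classical

/-!
Over `V(G) ⊔ E(G)` write `J` for all-ones matrices and `B` for the vertex-edge incidence
matrix, so that `B Bᵀ = Q(G)` and `Bᵀ B = 2I + A(L(G))`. With `a = λ - n - m + 2` and
`b = λ - n - 2r + 4` this gives `λI - Q(G^{1+1}) = [[aI - J, -J], [-J, bI - BᵀB]]`. The
edge block has constant row sums `b - 2r`, so for `b ≠ 2r` a unimodular column operation
clears the lower-left block and
`f(λ, G^{1+1}) = det (aI - (1 + m/(b - 2r)) J) · det (bI - BᵀB)`. The first factor is
`a^(n-1) (a - n - nm/(b - 2r))`; by Sylvester's determinant identity the second is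
`b^(m-n) f(b, G) = b^(m-n) (b - 2r) ∏_{i<n} (b - q_i)`, which needs `m ≥ n`, i.e. `r ≥ 2`.
Both sides are continuous in `λ`, which recovers the excluded value `b = 2r`.
-/

namespace Matrix

variable {ι κ R K : Type*} [Fintype ι] [Fintype κ] [DecidableEq ι] [DecidableEq κ]

theorem det_smul_one_sub_mul_comm_of_le [CommRing R] (A : Matrix ι κ R) (B : Matrix κ ι R)
    (h : Fintype.card κ ≤ Fintype.card ι) (t : R) :
    (t • 1 - A * B).det = t ^ (Fintype.card ι - Fintype.card κ) * (t • 1 - B * A).det := by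
  simpa only [eval_charpoly, Polynomial.eval_mul, Polynomial.eval_pow, Polynomial.eval_X,
    scalar_apply, smul_one_eq_diagonal] using
    congrArg (Polynomial.eval t) (charpoly_mul_comm_of_le A B h)

theorem det_smul_one_sub_const [CommRing R] [Nonempty ι] (a c : R) :
    (a • 1 - of fun _ _ => c : Matrix ι ι R).det
      = a ^ (Fintype.card ι - 1) * (a - c * Fintype.card ι) := by
  have hJ : (of fun _ _ => c : Matrix ι ι R)
      = replicateCol Unit (fun _ : ι => c) * replicateRow Unit (fun _ : ι => (1 : R)) := by
    ext; simp [mul_apply]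
  rw [hJ, det_smul_one_sub_mul_comm_of_le _ _ (by rw [Fintype.card_unit]; exact Fintype.card_pos),
    det_unique]
  simp [mul_apply, mul_comm]

theorem det_fromBlocks_const_of_sum_row [Field K] (A : Matrix ι ι K) (D : Matrix κ κ K)
    (β γ t : K) (hD : ∀ i, ∑ j, D i j = t) (ht : t ≠ 0) :
    (fromBlocks A (of fun _ _ => β) (of fun _ _ => γ) D).det
      = (A - of fun _ _ => β * γ * Fintype.card κ / t).det * D.det := by
  set P : Matrix (ι ⊕ κ) (ι ⊕ κ) K := fromBlocks 1 0 (of fun _ _ => -γ / t) 1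
  have hP : P.det = 1 := by simp [P]
  have hMP : fromBlocks A (of fun _ _ => β) (of fun _ _ => γ) D * P
      = fromBlocks (A - of fun _ _ => β * γ * Fintype.card κ / t) (of fun _ _ => β) 0 D := by
    rw [fromBlocks_multiply]
    congr 1 <;> ext i j
    · simp only [mul_one, add_apply, mul_apply, of_apply, Finset.sum_const, Finset.card_univ,
        nsmul_eq_mul, sub_apply]
      ring
    · simp
    · simp only [Matrix.mul_one, add_apply, of_apply, mul_apply, ← Finset.sum_mul, hD,
        zero_apply]
      field_simp
      ring
    · simp
  rw [← mul_one (fromBlocks _ _ _ _).det, ← hP, ← det_mul, hMP, det_fromBlocks_zero₂₁]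

end Matrix

theorem Fin.prod_univ_eq_mul_prod_castLE {M : Type*} [CommMonoid M] {n : ℕ} (hn : 0 < n)
    (f : Fin n → M) : ∏ i, f i
      = f ⟨n - 1, by omega⟩ * ∏ i : Fin (n - 1), f (Fin.castLE (Nat.sub_le n 1) i) := by
  obtain ⟨k, rfl⟩ : ∃ k, n = k + 1 := ⟨n - 1, by omega⟩
  rw [Fin.prod_univ_castSucc, mul_comm]
  rfl

open Matrix

theorem signlessLaplacian_eq_degMatrix_add_adjMatrix {W : Type*} [Fintype W]
    (H : SimpleGraph W) : signlessLaplacian H = H.degMatrix ℝ + H.adjMatrix ℝ := by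
  ext u v
  simp [signlessLaplacian, SimpleGraph.degMatrix, diagonal_apply]

theorem continuous_fQ {W : Type*} [Fintype W] (H : SimpleGraph W) : Continuous (fQ H) := by
  unfold fQ
  fun_prop

namespace SimpleGraph

variable {V W R : Type*} [Fintype V] [Fintype W] (G : SimpleGraph V)

theorem IsRegularOfDegree.card_mul_eq_two_mul_card_edgeSet {r : ℕ}
    (hreg : G.IsRegularOfDegree r) : Fintype.card V * r = 2 * Fintype.card G.edgeSet := by
  rw [← edgeFinset_card, ← sum_degrees_eq_twice_card_edges,
    Finset.sum_congr rfl fun v _ => hreg v, Finset.sum_const, Finset.card_univ, smul_eq_mul]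

theorem degree_eq_sum_adjMatrix (H : SimpleGraph W) [DecidableRel H.Adj] (w : W) :
    (H.degree w : ℝ) = ∑ x, H.adjMatrix ℝ w x := by
  simpa [mulVec, dotProduct] using (H.adjMatrix_mulVec_const_apply (a := (1 : ℝ)) (v := w)).symm

noncomputable def edgeIncMatrix (R : Type*) [Zero R] [One R] : Matrix V G.edgeSet R :=
  (G.incMatrix R).submatrix id Subtype.val

variable {G} in
theorem sum_edgeSet_eq_sum_sym2 {M : Type*} [AddCommMonoid M] (f : Sym2 V → M)
    (hf : ∀ e ∉ G.edgeSet, f e = 0) : ∑ e : G.edgeSet, f e = ∑ e, f e := by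
  rw [← Fintype.sum_subtype_add_sum_subtype (· ∈ G.edgeSet) f,
    Fintype.sum_eq_zero (fun e : {e // e ∉ G.edgeSet} => f e) fun e => hf e.1 e.2, add_zero]

theorem edgeIncMatrix_mul_transpose [Semiring R] :
    G.edgeIncMatrix R * (G.edgeIncMatrix R)ᵀ = G.incMatrix R * (G.incMatrix R)ᵀ := by
  ext u v
  refine sum_edgeSet_eq_sum_sym2 (fun e => G.incMatrix R u e * G.incMatrix R v e) fun e he => ?_
  rw [G.incMatrix_of_notMem_incidenceSet fun h => he h.1, zero_mul]

theorem edgeIncMatrix_mul_transpose_eq_signlessLaplacian :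
    G.edgeIncMatrix ℝ * (G.edgeIncMatrix ℝ)ᵀ = signlessLaplacian G := by
  rw [edgeIncMatrix_mul_transpose, incMatrix_mul_transpose]
  ext u v
  by_cases h : u = v
  · subst h; simp [signlessLaplacian]
  · simp [signlessLaplacian, h]

theorem sum_edgeIncMatrix_apply [NonAssocSemiring R] (v : V) :
    ∑ e, G.edgeIncMatrix R v e = G.degree v := by
  rw [← sum_incMatrix_apply]
  exact sum_edgeSet_eq_sum_sym2 (G.incMatrix R v) fun e he =>
    G.incMatrix_of_notMem_incidenceSet fun h => he h.1

theorem sum_edgeIncMatrix_apply_edge [NonAssocSemiring R] (e : G.edgeSet) :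
    ∑ v, G.edgeIncMatrix R v e = 2 :=
  G.sum_incMatrix_apply_of_mem_edgeSet e.2

theorem transpose_mul_edgeIncMatrix [NonAssocSemiring R] :
    (G.edgeIncMatrix R)ᵀ * G.edgeIncMatrix R = (2 : R) • 1 + G.lineGraph.adjMatrix R := by
  ext e f
  have hsub : ((G.edgeIncMatrix R)ᵀ * G.edgeIncMatrix R) e f
      = ((G.incMatrix R)ᵀ * G.incMatrix R) e f := rfl
  by_cases hef : e = f
  · subst hef
    simp [hsub, incMatrix_transpose_mul_diag]
  have hmem : ∀ v (d : G.edgeSet), (d : Sym2 V) ∈ G.incidenceSet v ↔ v ∈ (d : Sym2 V) :=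
    fun v d => and_iff_right d.2
  have hcommon : ∀ v w : V, v ∈ (e : Sym2 V) ∧ v ∈ (f : Sym2 V) →
      w ∈ (e : Sym2 V) ∧ w ∈ (f : Sym2 V) → v = w := by
    intro v w hv hw
    by_contra hvw
    exact hef (Subtype.ext (((Sym2.mem_and_mem_iff hvw).1 ⟨hv.1, hw.1⟩).trans
      ((Sym2.mem_and_mem_iff hvw).1 ⟨hv.2, hw.2⟩).symm))
  rw [hsub, Matrix.add_apply, Matrix.smul_apply, one_apply_ne hef, adjMatrix_apply,
    lineGraph_adj_iff_exists]
  simp only [mul_apply, transpose_apply, incMatrix_apply', hmem, ite_zero_mul_ite_zero, one_mul,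
    Finset.sum_boole, smul_zero, zero_add, hef, ne_eq, not_false_eq_true, true_and]
  split_ifs with hex
  · obtain ⟨v, hv⟩ := hex
    rw [Finset.card_eq_one.2 ⟨v, Finset.eq_singleton_iff_unique_mem.2
      ⟨by simpa using hv, fun w hw => hcommon w v (by simpa using hw) hv⟩⟩]
    simp
  · rw [Finset.card_eq_zero.2 (Finset.filter_eq_empty_iff.2 fun v _ hv => hex ⟨v, hv⟩),
      Nat.cast_zero]

theorem sum_transpose_mul_edgeIncMatrix_apply [NonAssocSemiring R] {r : ℕ}
    (hreg : G.IsRegularOfDegree r) (e : G.edgeSet) :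
    ∑ f, ((G.edgeIncMatrix R)ᵀ * G.edgeIncMatrix R) e f = 2 * r := by
  simp only [mul_apply, transpose_apply]
  rw [Finset.sum_comm]
  simp only [← Finset.mul_sum, sum_edgeIncMatrix_apply, hreg _, ← Finset.sum_mul,
    sum_edgeIncMatrix_apply_edge]

theorem IsRegularOfDegree.lineGraph_degree {r : ℕ} (hreg : G.IsRegularOfDegree r)
    (e : G.edgeSet) : (G.lineGraph.degree e : ℝ) = 2 * r - 2 := by
  have hrow := G.sum_transpose_mul_edgeIncMatrix_apply (R := ℝ) hreg e
  simp only [transpose_mul_edgeIncMatrix, Matrix.add_apply, Finset.sum_add_distrib,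
    ← degree_eq_sum_adjMatrix, Matrix.smul_apply, one_apply, smul_eq_mul, mul_ite, mul_one,
    mul_zero, Finset.sum_ite_eq, Finset.mem_univ, if_true] at hrow
  linarith

end SimpleGraph

section OnePlusOne

open SimpleGraph

variable {V R : Type*} (G : SimpleGraph V)

theorem adjMatrix_xyzTransform_one_plus_one [NonAssocSemiring R] :
    (xyzTransform G .one .plus .one).adjMatrix R
      = fromBlocks ((⊤ : SimpleGraph V).adjMatrix R) (of fun _ _ => 1) (of fun _ _ => 1)
          (G.lineGraph.adjMatrix R) := by
  ext (u | e) (v | f) <;> simp only [adjMatrix_apply] <;>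
    simp [xyzTransform, XYZ.rel, XYZ.inc] <;> split_ifs <;> simp_all

variable [Fintype V]

theorem degree_xyzTransform_one_plus_one_inl (u : V) :
    ((xyzTransform G .one .plus .one).degree (Sum.inl u) : ℝ)
      = Fintype.card V - 1 + Fintype.card G.edgeSet := by
  rw [degree_eq_sum_adjMatrix, adjMatrix_xyzTransform_one_plus_one, Fintype.sum_sum_type]
  simp only [fromBlocks_apply₁₁, fromBlocks_apply₁₂, of_apply, Finset.sum_const,
    Finset.card_univ, nsmul_eq_mul, mul_one]
  rw [← degree_eq_sum_adjMatrix, complete_graph_degree,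
    Nat.cast_sub (Fintype.card_pos_iff.2 ⟨u⟩), Nat.cast_one]

theorem degree_xyzTransform_one_plus_one_inr {r : ℕ} (hreg : G.IsRegularOfDegree r)
    (e : G.edgeSet) :
    ((xyzTransform G .one .plus .one).degree (Sum.inr e) : ℝ) = Fintype.card V + 2 * r - 2 := by
  rw [degree_eq_sum_adjMatrix, adjMatrix_xyzTransform_one_plus_one, Fintype.sum_sum_type]
  simp only [fromBlocks_apply₂₁, fromBlocks_apply₂₂, of_apply, Finset.sum_const,
    Finset.card_univ, nsmul_eq_mul, mul_one]
  rw [← degree_eq_sum_adjMatrix, hreg.lineGraph_degree]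
  ring

theorem fQ_xyzTransform_one_plus_one_eq_det_fromBlocks {r : ℕ}
    (hreg : G.IsRegularOfDegree r) (lam : ℝ) :
    fQ (xyzTransform G .one .plus .one) lam
      = (fromBlocks ((lam - Fintype.card V - Fintype.card G.edgeSet + 2) • (1 : Matrix V V ℝ)
          - of fun _ _ => 1) (of fun _ _ => -1) (of fun _ _ => -1)
          ((lam - Fintype.card V - 2 * r + 4) • 1
            - (G.edgeIncMatrix ℝ)ᵀ * G.edgeIncMatrix ℝ)).det := by
  rw [fQ]
  congr 1
  rw [signlessLaplacian_eq_degMatrix_add_adjMatrix, adjMatrix_xyzTransform_one_plus_one,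
    transpose_mul_edgeIncMatrix]
  ext (u | e) (v | f)
  · by_cases huv : u = v
    · subst huv
      simp [degMatrix, degree_xyzTransform_one_plus_one_inl]
      ring
    · simp [degMatrix, huv]
  · simp [degMatrix]
  · simp [degMatrix]
  · by_cases hef : e = f
    · subst hef
      simp [degMatrix, degree_xyzTransform_one_plus_one_inr G hreg]
      ring
    · simp [degMatrix, hef]

theorem fQ_xyzTransform_one_plus_one_of_ne [Nonempty V] {r : ℕ} (hreg : G.IsRegularOfDegree r)
    (hle : Fintype.card V ≤ Fintype.card G.edgeSet) (lam : ℝ)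
    (hne : lam - Fintype.card V - 4 * r + 4 ≠ 0) :
    fQ (xyzTransform G .one .plus .one) lam
      = (lam - Fintype.card V - Fintype.card G.edgeSet + 2) ^ (Fintype.card V - 1)
        * (lam - Fintype.card V - Fintype.card G.edgeSet + 2
          - (1 + Fintype.card G.edgeSet / (lam - Fintype.card V - 4 * r + 4)) * Fintype.card V)
        * (lam - Fintype.card V - 2 * r + 4) ^ (Fintype.card G.edgeSet - Fintype.card V)
        * fQ G (lam - Fintype.card V - 2 * r + 4) := by
  set n := Fintype.card V
  set m := Fintype.card G.edgeSet
  set b := lam - n - 2 * r + 4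
  have hb : b - 2 * r = lam - n - 4 * r + 4 := by ring
  have hrow : ∀ e, ∑ f, (b • (1 : Matrix G.edgeSet G.edgeSet ℝ)
      - (G.edgeIncMatrix ℝ)ᵀ * G.edgeIncMatrix ℝ) e f = b - 2 * r := by
    intro e
    simp [Matrix.sub_apply, Finset.sum_sub_distrib, sum_transpose_mul_edgeIncMatrix_apply G hreg,
      one_apply]
  have hA : ((lam - n - m + 2) • 1 - of fun _ _ => 1)
      - (of fun _ _ => -1 * -1 * (m : ℝ) / (b - 2 * r))
      = (lam - n - m + 2) • (1 : Matrix V V ℝ)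
        - of fun _ _ => 1 + m / (lam - n - 4 * r + 4) := by
    ext u v
    simp only [Matrix.sub_apply, of_apply, hb]
    ring
  rw [fQ_xyzTransform_one_plus_one_eq_det_fromBlocks G hreg,
    det_fromBlocks_const_of_sum_row _ _ _ _ _ hrow (hb ▸ hne), hA, det_smul_one_sub_const,
    det_smul_one_sub_mul_comm_of_le _ _ hle, edgeIncMatrix_mul_transpose_eq_signlessLaplacian]
  simp only [mul_assoc]
  rfl

end OnePlusOne

theorem signless_charpoly_xyz_op1 {V : Type*} [Fintype V] (G : SimpleGraph V) (r n m : ℕ)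
    (hn : Fintype.card V = n) (hm : Fintype.card G.edgeSet = m)
    (hreg : G.IsRegularOfDegree r) (hr2 : 2 ≤ r) (hn0 : 0 < n)
    (q : Fin n → ℝ)
    (hlast : q ⟨n - 1, by omega⟩ = 2 * r)
    (hq : ∀ x : ℝ, fQ G x = ∏ i : Fin n, (x - q i)) :
    ∀ lam : ℝ,
      fQ (xyzTransform G XYZ.one XYZ.plus XYZ.one) lam =
        ((lam - 2 * n - m + 2) * (lam - n - 4 * r + 4) - m * n) *
          (lam - n - 2 * r + 4) ^ (m - n) * (lam - n - m + 2) ^ (n - 1) *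
          ∏ i : Fin (n - 1), (lam - n - 2 * r + 4 - (q (Fin.castLE (Nat.sub_le n 1) i))) := by
  subst hn hm
  have : Nonempty V := Fintype.card_pos_iff.1 hn0
  have hle : Fintype.card V ≤ Fintype.card G.edgeSet := by
    have := hreg.card_mul_eq_two_mul_card_edgeSet
    nlinarith
  rw [← funext_iff]
  refine Continuous.ext_on (dense_compl_singleton ((Fintype.card V : ℝ) + 4 * r - 4))
    (continuous_fQ _) (by fun_prop) fun x hx => ?_
  have hx' : x - Fintype.card V - 4 * r + 4 ≠ 0 := fun h =>
    hx (by rw [Set.mem_singleton_iff]; linarith)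
  rw [fQ_xyzTransform_one_plus_one_of_ne G hreg hle x hx', hq,
    Fin.prod_univ_eq_mul_prod_castLE hn0, hlast]
  field_simp
  ring
end
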